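/- Let g be a real Lie algebra and D a derivation of g satisfying D³ = −D. Then for all X, Y ∈ ker(D² + id) one has D[X,Y] = 0 (i.e. [X,Y] ∈ ker D), and moreover [DX, DY] = [X,Y]. -/
import Mathlib


/-- If D is a derivation of a real Lie algebra with D³ = −D, then for all
X, Y ∈ ker(D² + id) one has D[X,Y] = 0 and [DX,DY] = [X,Y]. -/
theorem stmt3 {g : Type*} [LieRing g] [LieAlgebra ℝ g]
    (D : g →ₗ[ℝ] g)
    (hder : ∀ x y : g, D ⁅x, y⁆ = ⁅D x, y⁆ + ⁅x, D y⁆)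
    (hD3 : D ∘ₗ D ∘ₗ D = -D)
    (X Y : g)
    (hX : X ∈ LinearMap.ker (D ∘ₗ D + LinearMap.id))
    (hY : Y ∈ LinearMap.ker (D ∘ₗ D + LinearMap.id)) :
    D ⁅X, Y⁆ = 0 ∧ ⁅D X, D Y⁆ = ⁅X, Y⁆ := by
  simp only [LinearMap.mem_ker, LinearMap.add_apply, LinearMap.comp_apply,
    LinearMap.id_apply] at hX hY
  have hX2 : D (D X) = -X := by linear_combination (norm := module) hX
  have hY2 : D (D Y) = -Y := by linear_combination (norm := module) hY
  have h1 : D ⁅X, Y⁆ = ⁅D X, Y⁆ + ⁅X, D Y⁆ := hder X Y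
  have h2 : D (D ⁅X, Y⁆) = (⁅D X, D Y⁆ + ⁅D X, D Y⁆) - (⁅X, Y⁆ + ⁅X, Y⁆) := by
    rw [h1, map_add, hder, hder, hX2, hY2, neg_lie, lie_neg]
    abel
  have h3 : D (D (D ⁅X, Y⁆)) =
      -(D ⁅X, Y⁆ + D ⁅X, Y⁆ + D ⁅X, Y⁆ + D ⁅X, Y⁆) := by
    rw [h2]
    simp only [map_sub, map_add, hder, hX2, hY2, neg_lie, lie_neg]
    abel
  have h4 : D (D (D ⁅X, Y⁆)) = -D ⁅X, Y⁆ := by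
    have := congrArg (fun f => f ⁅X, Y⁆) hD3
    simpa using this
  have hD0 : D ⁅X, Y⁆ = 0 := by
    have h5 : (3 : ℝ) • D ⁅X, Y⁆ = 0 := by
      rw [h4] at h3
      linear_combination (norm := module) h3
    have := smul_eq_zero.mp h5
    simpa using this
  refine ⟨hD0, ?_⟩
  have h6 : D (D ⁅X, Y⁆) = 0 := by rw [hD0, map_zero]
  rw [h2] at h6
  have h5 : (2 : ℝ) • (⁅D X, D Y⁆ - ⁅X, Y⁆) = 0 := by
    linear_combination (norm := module) h6
  have := smul_eq_zero.mp h5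
  simp at this
  linear_combination (norm := module) this
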